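/- In a qualitative conditional probability structure satisfying Axioms 1–6, let H₁, H₂ be disjoint events. (1) If E ∩ (H₁ ∪ H₂) is non-null and E|H₁ ⪰ E|H₂, then H₁ | E ∩ (H₁ ∪ H₂) ⪰ H₁ | (H₁ ∪ H₂). (2) If H₁ and H₂ are non-null and H₁ | E ∩ (H₁ ∪ H₂) ⪰ H₁ | (H₁ ∪ H₂), then E|H₁ ⪰ E|H₂. In both parts, strict hypothesis yields strict conclusion. -/
import Mathlib


open Set

/-- `QNull le A` : the event `A` is null, i.e. `A|Δ ⪯ ∅|Δ` (Axiom 2). -/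
def QNull {Δ : Type*} (le : Set Δ → Set Δ → Set Δ → Set Δ → Prop) (A : Set Δ) : Prop :=
  le A univ ∅ univ

/-- `QLt le A B C D` : `A|B ≺ C|D`, the strict part of the ordering. -/
def QLt {Δ : Type*} (le : Set Δ → Set Δ → Set Δ → Set Δ → Prop) (A B C D : Set Δ) : Prop :=
  le A B C D ∧ ¬ le C D A B

/-- `QEquiv le A B C D` : `A|B ∼ C|D`, i.e. both directions of `⪯` hold. -/
def QEquiv {Δ : Type*} (le : Set Δ → Set Δ → Set Δ → Set Δ → Prop) (A B C D : Set Δ) : Prop :=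
  le A B C D ∧ le C D A B

/-- A qualitative conditional probability structure on `Δ`: a relation
`le A B C D` (read `A|B ⪯ C|D`, meaningful when the conditioning events `B`, `D`
are non-null) satisfying Axioms 1–6 of Krantz et al. -/
structure QCP (Δ : Type*) where
  le : Set Δ → Set Δ → Set Δ → Set Δ → Prop
  /-- Axiom 1: totality. -/
  total : ∀ A B C D, ¬ QNull le B → ¬ QNull le D → le A B C D ∨ le C D A B
  /-- Axiom 1: reflexivity. -/
  refl : ∀ A B, ¬ QNull le B → le A B A B
  /-- Axiom 1: transitivity. -/
  trans : ∀ A B C D E F, ¬ QNull le B → ¬ QNull le D → ¬ QNull le F →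
      le A B C D → le C D E F → le A B E F
  /-- Axiom 2: the sure event is not null. -/
  univ_not_null : ¬ QNull le (univ : Set Δ)
  /-- Axiom 3: `A|A ∼ B|B`. -/
  ax3_id : ∀ A B, ¬ QNull le A → ¬ QNull le B → QEquiv le A A B B
  /-- Axiom 3: `A|B ⪯ Δ|C` for non-null `C`. -/
  ax3_bound : ∀ A B C, ¬ QNull le B → ¬ QNull le C → le A B univ C
  /-- Axiom 4: `(A∩B)|B ∼ A|B`. -/
  ax4 : ∀ A B, ¬ QNull le B → QEquiv le (A ∩ B) B A B
  /-- Axiom 5: disjoint additivity. -/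
  ax5 : ∀ A B A' B' C C', ¬ QNull le C → ¬ QNull le C' → A ∩ B = ∅ → A' ∩ B' = ∅ →
      le A C A' C' → le B C B' C' → le (A ∪ B) C (A' ∪ B') C'
  /-- Axiom 5, strictness clause. -/
  ax5_strict : ∀ A B A' B' C C', ¬ QNull le C → ¬ QNull le C' → A ∩ B = ∅ → A' ∩ B' = ∅ →
      le A C A' C' → le B C B' C' → (QLt le A C A' C' ∨ QLt le B C B' C') →
      QLt le (A ∪ B) C (A' ∪ B') C'
  /-- Axiom 6a. -/
  ax6a : ∀ A B C A' B' C', C ⊆ B → B ⊆ A → C' ⊆ B' → B' ⊆ A' →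
      ¬ QNull le A → ¬ QNull le B → ¬ QNull le A' → ¬ QNull le B' →
      le B A C' B' → le C B B' A' → le C A C' A'
  /-- Axiom 6a, strictness clause. -/
  ax6a_strict : ∀ A B C A' B' C', C ⊆ B → B ⊆ A → C' ⊆ B' → B' ⊆ A' →
      ¬ QNull le A → ¬ QNull le B → ¬ QNull le A' → ¬ QNull le B' →
      le B A C' B' → le C B B' A' → (QLt le B A C' B' ∨ QLt le C B B' A') →
      QLt le C A C' A'
  /-- Axiom 6b. -/
  ax6b : ∀ A B C A' B' C', C ⊆ B → B ⊆ A → C' ⊆ B' → B' ⊆ A' →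
      ¬ QNull le A → ¬ QNull le B → ¬ QNull le A' → ¬ QNull le B' →
      le B A B' A' → le C B C' B' → le C A C' A'
  /-- Axiom 6b, strictness clause. -/
  ax6b_strict : ∀ A B C A' B' C', C ⊆ B → B ⊆ A → C' ⊆ B' → B' ⊆ A' →
      ¬ QNull le A → ¬ QNull le B → ¬ QNull le A' → ¬ QNull le B' →
      le B A B' A' → le C B C' B' → (QLt le B A B' A' ∨ QLt le C B C' B') →
      ¬ QNull le C → QLt le C A C' A'

section Helpers

variable {Δ : Type*} (q : QCP Δ)

/-- Anything conditional on `C` is `⪯ C|C`. -/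
lemma qcp_le_self {C : Set Δ} (hC : ¬ QNull q.le C) (X : Set Δ) :
    q.le X C C C := by
  have h1 := q.ax3_bound X C C hC hC
  have h2 := (q.ax4 univ C hC).2
  rw [univ_inter] at h2
  exact q.trans X C univ C C C hC hC hC h1 h2

/-- `∅|C ⪯ A|C`. -/
lemma qcp_empty_le {C : Set Δ} (hC : ¬ QNull q.le C) (A : Set Δ) :
    q.le ∅ C A C := by
  by_contra h
  have h' : q.le A C ∅ C := by
    rcases q.total ∅ C A C hC hC with h' | h'
    · exact absurd h' h
    · exact h'
  have hyp1 : q.le (A ∩ C) C ∅ C :=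
    q.trans (A ∩ C) C A C ∅ C hC hC hC (q.ax4 A C hC).1 h'
  have hyp2 : q.le (C \ A) C C C := qcp_le_self q hC (C \ A)
  have dis1 : (A ∩ C) ∩ (C \ A) = ∅ := by
    ext x; simp only [mem_inter_iff, mem_diff, mem_empty_iff_false, iff_false]
    tauto
  have hstrict : QLt q.le (A ∩ C) C ∅ C ∨ QLt q.le (C \ A) C C C :=
    Or.inl ⟨hyp1, fun hc => h (q.trans ∅ C (A ∩ C) C A C hC hC hC hc (q.ax4 A C hC).1)⟩
  have hconcl := q.ax5_strict (A ∩ C) (C \ A) ∅ C C C hC hC dis1 (empty_inter C)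
    hyp1 hyp2 hstrict
  have hu : (A ∩ C) ∪ (C \ A) = C := by
    ext x; simp only [mem_union, mem_inter_iff, mem_diff]
    tauto
  rw [hu, empty_union] at hconcl
  exact hconcl.2 hconcl.1

/-- Monotonicity: `A ⊆ B → A|C ⪯ B|C`. -/
lemma qcp_mono {C : Set Δ} (hC : ¬ QNull q.le C) {A B : Set Δ} (hAB : A ⊆ B) :
    q.le A C B C := by
  have h := q.ax5 A ∅ A (B \ A) C C hC hC (inter_empty A) (inter_diff_self A B)
    (q.refl A C hC) (qcp_empty_le q hC (B \ A))
  rwa [union_empty, union_diff_cancel hAB] at h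

/-- A superset of a non-null event is non-null. -/
lemma qcp_nonnull_mono {A B : Set Δ} (hAB : A ⊆ B) (hA : ¬ QNull q.le A) :
    ¬ QNull q.le B := by
  intro hB
  exact hA (q.trans A univ B univ ∅ univ q.univ_not_null q.univ_not_null q.univ_not_null
    (qcp_mono q q.univ_not_null hAB) hB)

/-- Complement lemma from additivity: with disjoint decompositions
`C = A ∪ B`, `C' = A' ∪ B'`, `A|C ⪯ A'|C'` implies `B'|C' ⪯ B|C`. -/
lemma qcp_compl {A B A' B' C C' : Set Δ} (hC : ¬ QNull q.le C) (hC' : ¬ QNull q.le C')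
    (hAB : A ∩ B = ∅) (hA'B' : A' ∩ B' = ∅) (hU : A ∪ B = C) (hU' : A' ∪ B' = C')
    (h : q.le A C A' C') : q.le B' C' B C := by
  by_contra hc
  have h' : q.le B C B' C' := by
    rcases q.total B' C' B C hC' hC with h' | h'
    · exact absurd h' hc
    · exact h'
  have hs := q.ax5_strict A B A' B' C C' hC hC' hAB hA'B' h h' (Or.inr ⟨h', hc⟩)
  rw [hU, hU'] at hs
  exact hs.2 (q.ax3_id C C' hC hC').2

/-- Strict version of the complement lemma. -/
lemma qcp_compl_strict {A B A' B' C C' : Set Δ} (hC : ¬ QNull q.le C) (hC' : ¬ QNull q.le C')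
    (hAB : A ∩ B = ∅) (hA'B' : A' ∩ B' = ∅) (hU : A ∪ B = C) (hU' : A' ∪ B' = C')
    (h : QLt q.le A C A' C') : QLt q.le B' C' B C := by
  refine ⟨qcp_compl q hC hC' hAB hA'B' hU hU' h.1, fun hc => ?_⟩
  have hs := q.ax5_strict A B A' B' C C' hC hC' hAB hA'B' h.1 hc (Or.inl h)
  rw [hU, hU'] at hs
  exact hs.2 (q.ax3_id C C' hC hC').2

/-- Cancellation: for chains `C ⊆ B ⊆ A`, `C ⊆ B' ⊆ A`,
`C|B ⪯ B'|A` implies `C|B' ⪯ B|A`. -/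
lemma qcp_cancel {A B B' C : Set Δ} (hCB : C ⊆ B) (hBA : B ⊆ A) (hCB' : C ⊆ B')
    (hB'A : B' ⊆ A) (hA : ¬ QNull q.le A) (hB : ¬ QNull q.le B) (hB' : ¬ QNull q.le B')
    (h : q.le C B B' A) : q.le C B' B A := by
  by_contra hc
  have h' : q.le B A C B' := by
    rcases q.total C B' B A hB' hA with h' | h'
    · exact absurd h' hc
    · exact h'
  have hs := q.ax6a_strict A B C A B' C hCB hBA hCB' hB'A hA hB hA hB' h' h
    (Or.inl ⟨h', hc⟩)
  exact hs.2 hs.1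

/-- Strict cancellation. -/
lemma qcp_cancel_strict {A B B' C : Set Δ} (hCB : C ⊆ B) (hBA : B ⊆ A) (hCB' : C ⊆ B')
    (hB'A : B' ⊆ A) (hA : ¬ QNull q.le A) (hB : ¬ QNull q.le B) (hB' : ¬ QNull q.le B')
    (h : QLt q.le C B B' A) : QLt q.le C B' B A := by
  refine ⟨qcp_cancel q hCB hBA hCB' hB'A hA hB hB' h.1, fun hc => ?_⟩
  have hs := q.ax6a_strict A B C A B' C hCB hBA hCB' hB'A hA hB hA hB' hc h.1
    (Or.inr h)
  exact hs.2 hs.1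

/-- Cancellation, other form: `B|A ⪯ C|B'` implies `B'|A ⪯ C|B`. -/
lemma qcp_cancel' {A B B' C : Set Δ} (hCB : C ⊆ B) (hBA : B ⊆ A) (hCB' : C ⊆ B')
    (hB'A : B' ⊆ A) (hA : ¬ QNull q.le A) (hB : ¬ QNull q.le B) (hB' : ¬ QNull q.le B')
    (h : q.le B A C B') : q.le B' A C B := by
  by_contra hc
  have h' : q.le C B B' A := by
    rcases q.total B' A C B hA hB with h' | h'
    · exact absurd h' hc
    · exact h'
  have hs := q.ax6a_strict A B C A B' C hCB hBA hCB' hB'A hA hB hA hB' h h'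
    (Or.inr ⟨h', hc⟩)
  exact hs.2 hs.1

/-- Strict version of `qcp_cancel'`. -/
lemma qcp_cancel'_strict {A B B' C : Set Δ} (hCB : C ⊆ B) (hBA : B ⊆ A) (hCB' : C ⊆ B')
    (hB'A : B' ⊆ A) (hA : ¬ QNull q.le A) (hB : ¬ QNull q.le B) (hB' : ¬ QNull q.le B')
    (h : QLt q.le B A C B') : QLt q.le B' A C B := by
  refine ⟨qcp_cancel' q hCB hBA hCB' hB'A hA hB hB' h.1, fun hc => ?_⟩
  have hs := q.ax6a_strict A B C A B' C hCB hBA hCB' hB'A hA hB hA hB' h.1 hc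
    (Or.inl h)
  exact hs.2 hs.1

end Helpers

/-- qualitative Bayes-factor/favoring proposition.  For disjoint
`H₁`, `H₂`: (1) if `E ∩ (H₁ ∪ H₂)` is non-null and `E|H₁ ⪰ E|H₂`, then
`H₁|E ∩ (H₁∪H₂) ⪰ H₁|(H₁∪H₂)`; (2) if `H₁`, `H₂` are non-null and
`H₁|E ∩ (H₁∪H₂) ⪰ H₁|(H₁∪H₂)`, then `E|H₁ ⪰ E|H₂`; with strictness transfer. -/
theorem qcp_bayes_factor_favoring {Δ : Type*} (q : QCP Δ) (E H1 H2 : Set Δ)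
    (hdisj : H1 ∩ H2 = ∅) (hH1 : ¬ QNull q.le H1) (hH2 : ¬ QNull q.le H2) :
    ((¬ QNull q.le (E ∩ (H1 ∪ H2)) → q.le E H2 E H1 →
        q.le H1 (H1 ∪ H2) H1 (E ∩ (H1 ∪ H2))) ∧
     (¬ QNull q.le (E ∩ (H1 ∪ H2)) → QLt q.le E H2 E H1 →
        QLt q.le H1 (H1 ∪ H2) H1 (E ∩ (H1 ∪ H2)))) ∧
    ((¬ QNull q.le (E ∩ (H1 ∪ H2)) → q.le H1 (H1 ∪ H2) H1 (E ∩ (H1 ∪ H2)) →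
        q.le E H2 E H1) ∧
     (¬ QNull q.le (E ∩ (H1 ∪ H2)) → QLt q.le H1 (H1 ∪ H2) H1 (E ∩ (H1 ∪ H2)) →
        QLt q.le E H2 E H1)) := by
  classical
  set K := H1 ∪ H2 with hKdef
  set F := E ∩ K with hFdef
  set A1 := E ∩ H1 with hA1def
  set A2 := E ∩ H2 with hA2def
  have hH1K : H1 ⊆ K := subset_union_left
  have hH2K : H2 ⊆ K := subset_union_right
  have hK : ¬ QNull q.le K := qcp_nonnull_mono q hH1K hH1
  have hFK : F ⊆ K := inter_subset_right
  have hA1H1 : A1 ⊆ H1 := inter_subset_right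
  have hA2H2 : A2 ⊆ H2 := inter_subset_right
  have hA1F : A1 ⊆ F := inter_subset_inter_right E hH1K
  have hA2F : A2 ⊆ F := inter_subset_inter_right E hH2K
  have hUF : A1 ∪ A2 = F := by
    rw [hA1def, hA2def, hFdef, hKdef, inter_union_distrib_left]
  have hUK : H1 ∪ H2 = K := hKdef.symm
  have hUA : A1 ∩ A2 = ∅ := by
    apply subset_empty_iff.mp
    intro x hx
    rw [← hdisj]
    exact ⟨hx.1.2, hx.2.2⟩
  have hH1F : H1 ∩ F = A1 := by
    rw [hFdef, hA1def, hKdef]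
    ext x
    simp only [mem_inter_iff, mem_union]
    tauto
  have eE1 : QEquiv q.le A1 H1 E H1 := by
    have h := q.ax4 E H1 hH1; rwa [← hA1def] at h
  have eE2 : QEquiv q.le A2 H2 E H2 := by
    have h := q.ax4 E H2 hH2; rwa [← hA2def] at h
  refine ⟨⟨?_, ?_⟩, ?_, ?_⟩
  · -- part (1), non-strict
    intro hF h
    have eA1F : QEquiv q.le A1 F H1 F := by
      have h' := q.ax4 H1 F hF; rwa [hH1F] at h'
    have hA : q.le A2 H2 A1 H1 :=
      q.trans A2 H2 E H2 A1 H1 hH2 hH2 hH1 eE2.1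
        (q.trans E H2 E H1 A1 H1 hH2 hH1 hH1 h eE1.2)
    by_contra hgoal
    have h1 : q.le H1 F H1 K := by
      rcases q.total H1 K H1 F hK hF with h' | h'
      · exact absurd h' hgoal
      · exact h'
    have hlt : QLt q.le A1 F H1 K :=
      ⟨q.trans A1 F H1 F H1 K hF hF hK eA1F.1 h1,
       fun hc => hgoal (q.trans H1 K A1 F H1 F hK hF hF hc eA1F.1)⟩
    have h2 : QLt q.le H2 K A2 F :=
      qcp_compl_strict q hF hK hUA hdisj hUF hUK hlt
    have h3 : QLt q.le F K A2 H2 :=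
      qcp_cancel'_strict q hA2H2 hH2K hA2F hFK hK hH2 hF h2
    have h4 : QLt q.le A1 H1 F K :=
      qcp_cancel_strict q hA1F hFK hA1H1 hH1K hK hF hH1 hlt
    exact h3.2 (q.trans A2 H2 A1 H1 F K hH2 hH1 hK hA h4.1)
  · -- part (1), strict
    intro hF h
    have eA1F : QEquiv q.le A1 F H1 F := by
      have h' := q.ax4 H1 F hF; rwa [hH1F] at h'
    have hA : QLt q.le A2 H2 A1 H1 :=
      ⟨q.trans A2 H2 E H2 A1 H1 hH2 hH2 hH1 eE2.1
        (q.trans E H2 E H1 A1 H1 hH2 hH1 hH1 h.1 eE1.2),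
       fun hc => h.2 (q.trans E H1 A1 H1 E H2 hH1 hH1 hH2 eE1.2
        (q.trans A1 H1 A2 H2 E H2 hH1 hH2 hH2 hc eE2.1))⟩
    by_contra hgoal
    have h1 : q.le H1 F H1 K := by
      rcases q.total H1 F H1 K hF hK with h' | h'
      · exact h'
      · by_contra hc
        exact hgoal ⟨h', fun h'' => hc h''⟩
    have hle : q.le A1 F H1 K := q.trans A1 F H1 F H1 K hF hF hK eA1F.1 h1
    have h2 : q.le H2 K A2 F := qcp_compl q hF hK hUA hdisj hUF hUK hle
    have h3 : q.le F K A2 H2 := qcp_cancel' q hA2H2 hH2K hA2F hFK hK hH2 hF h2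
    have h4 : q.le A1 H1 F K := qcp_cancel q hA1F hFK hA1H1 hH1K hK hF hH1 hle
    exact hA.2 (q.trans A1 H1 F K A2 H2 hH1 hK hH2 h4 h3)
  · -- part (2), non-strict
    intro hF h
    have eA1F : QEquiv q.le A1 F H1 F := by
      have h' := q.ax4 H1 F hF; rwa [hH1F] at h'
    have hle : q.le H1 K A1 F := q.trans H1 K H1 F A1 F hK hF hF h eA1F.2
    have h2 : q.le F K A1 H1 := qcp_cancel' q hA1H1 hH1K hA1F hFK hK hH1 hF hle
    have h3 : q.le A2 F H2 K := qcp_compl q hK hF hdisj hUA hUK hUF hle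
    have h4 : q.le A2 H2 F K := qcp_cancel q hA2F hFK hA2H2 hH2K hK hF hH2 h3
    have h5 : q.le A2 H2 A1 H1 := q.trans A2 H2 F K A1 H1 hH2 hK hH1 h4 h2
    exact q.trans E H2 A2 H2 E H1 hH2 hH2 hH1 eE2.2
      (q.trans A2 H2 A1 H1 E H1 hH2 hH1 hH1 h5 eE1.1)
  · -- part (2), strict
    intro hF h
    have eA1F : QEquiv q.le A1 F H1 F := by
      have h' := q.ax4 H1 F hF; rwa [hH1F] at h'
    have hlt : QLt q.le H1 K A1 F :=
      ⟨q.trans H1 K H1 F A1 F hK hF hF h.1 eA1F.2,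
       fun hc => h.2 (q.trans H1 F A1 F H1 K hF hF hK eA1F.2 hc)⟩
    have h2 : QLt q.le F K A1 H1 :=
      qcp_cancel'_strict q hA1H1 hH1K hA1F hFK hK hH1 hF hlt
    have h3 : QLt q.le A2 F H2 K :=
      qcp_compl_strict q hK hF hdisj hUA hUK hUF hlt
    have h4 : QLt q.le A2 H2 F K :=
      qcp_cancel_strict q hA2F hFK hA2H2 hH2K hK hF hH2 h3
    have h5 : QLt q.le A2 H2 A1 H1 :=
      ⟨q.trans A2 H2 F K A1 H1 hH2 hK hH1 h4.1 h2.1,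
       fun hc => h2.2 (q.trans A1 H1 A2 H2 F K hH1 hH2 hK hc h4.1)⟩
    refine ⟨q.trans E H2 A2 H2 E H1 hH2 hH2 hH1 eE2.2
      (q.trans A2 H2 A1 H1 E H1 hH2 hH1 hH1 h5.1 eE1.1), fun hc => ?_⟩
    exact h5.2 (q.trans A1 H1 E H1 A2 H2 hH1 hH1 hH2 eE1.1
      (q.trans E H1 E H2 A2 H2 hH1 hH2 hH2 hc eE2.2))
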